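/- With S = 2π the area of the unit cylinder (radius 1, height 1) and S̄ = 4NM·Ā_pqr the total area of the Schwarz lantern triangulation, it holds that 4π⁴/(3N²) − (4π⁶/(45N⁴))·(2 + 45M²) < S² − S̄² < 4π⁴/(3N²). -/

import Mathlib

open Real Filter Asymptotics

/-- Squared Euclidean distance between two points of `ℝ³`. -/
noncomputable def distSq (a b : Fin 3 → ℝ) : ℝ :=
  (a 0 - b 0) ^ 2 + (a 1 - b 1) ^ 2 + (a 2 - b 2) ^ 2

/-- Euclidean inner product on `ℝ³`. -/
noncomputable def inner3 (a b : Fin 3 → ℝ) : ℝ :=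
  a 0 * b 0 + a 1 * b 1 + a 2 * b 2

/-- Euclidean area of the triangle with vertices `a b c` in `ℝ³`
(half the norm of the cross product of two edge vectors). -/
noncomputable def triArea (a b c : Fin 3 → ℝ) : ℝ :=
  (1 / 2) * Real.sqrt
    (((b 1 - a 1) * (c 2 - a 2) - (b 2 - a 2) * (c 1 - a 1)) ^ 2 +
     ((b 2 - a 2) * (c 0 - a 0) - (b 0 - a 0) * (c 2 - a 2)) ^ 2 +
     ((b 0 - a 0) * (c 1 - a 1) - (b 1 - a 1) * (c 0 - a 0)) ^ 2)

/-- Vertex `p = (1,0,0)` of a typical Schwarz-lantern triangle. -/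
noncomputable def vecP : Fin 3 → ℝ := ![1, 0, 0]

/-- Vertex `q = (cos(π/N), sin(π/N), 1/(2M))` of a typical Schwarz-lantern triangle. -/
noncomputable def vecQ (N M : ℝ) : Fin 3 → ℝ := ![Real.cos (π / N), Real.sin (π / N), 1 / (2 * M)]

/-- Vertex `r = (cos(2π/N), sin(2π/N), 0)` of a typical Schwarz-lantern triangle. -/
noncomputable def vecR (N : ℝ) : Fin 3 → ℝ := ![Real.cos (2 * π / N), Real.sin (2 * π / N), 0]

/-- Outward unit normal of the unit cylinder `x² + y² = 1` at a point `(x,y,z)`. -/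
noncomputable def cylNormal (v : Fin 3 → ℝ) : Fin 3 → ℝ := ![v 0, v 1, 0]

/-!
Write `x = π / N`. The lantern triangle has squared area `sin² x · (1/(4M²) + (1 - cos x)²)`,
so `S² - S̄² = 4N² (x² - sin² x - 4M² sin² x (1 - cos x)²)`. The Taylor bounds
`x - x³/6 ≤ sin x ≤ x - x³/6 + x⁵/120` pin `x² - sin² x` between `x⁴/3 - 2x⁶/45` and `x⁴/3`,
while `0 ≤ 1 - cos x ≤ x²/2` puts the height-dependent term between `0` and `M² x⁶`.
-/

namespace Real

theorem cos_le_one_sub_sq_div_two_add_quartic (x : ℝ) :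
    cos x ≤ 1 - x ^ 2 / 2 + x ^ 4 / 24 := by
  suffices h : ∀ y, 0 ≤ y → cos y ≤ 1 - y ^ 2 / 2 + y ^ 4 / 24 by
    simpa [cos_abs, sq_abs, (show Even 4 by decide).pow_abs] using h |x| (abs_nonneg x)
  intro y hy
  let f (t : ℝ) : ℝ := 1 - t ^ 2 / 2 + t ^ 4 / 24 - cos t
  have hderiv (t : ℝ) : deriv f t = sin t - (t - t ^ 3 / 6) := by
    simp (disch := fun_prop) [f]
    ring
  have hmono : MonotoneOn f (Set.Ici 0) := by
    apply monotoneOn_of_deriv_nonneg (convex_Ici 0) (by fun_prop) (by fun_prop)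
    intro t ht
    rw [interior_Ici] at ht
    linarith [hderiv t, sin_ge_sub_cube (le_of_lt ht)]
  have h0 : f 0 ≤ f y := hmono (by simp) hy hy
  norm_num [f] at h0
  linarith

theorem sin_le_sub_cube_add_quintic {x : ℝ} (hx : 0 ≤ x) :
    sin x ≤ x - x ^ 3 / 6 + x ^ 5 / 120 := by
  let f (t : ℝ) : ℝ := t - t ^ 3 / 6 + t ^ 5 / 120 - sin t
  have hderiv (t : ℝ) : deriv f t = 1 - t ^ 2 / 2 + t ^ 4 / 24 - cos t := by
    simp (disch := fun_prop) [f]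
    ring
  have hmono : MonotoneOn f (Set.Ici 0) := by
    apply monotoneOn_of_deriv_nonneg (convex_Ici 0) (by fun_prop) (by fun_prop)
    intro t _
    linarith [hderiv t, cos_le_one_sub_sq_div_two_add_quartic t]
  have h0 : f 0 ≤ f x := hmono (by simp) hx hx
  norm_num [f] at h0
  linarith

theorem sq_sub_sin_sq_lt {x : ℝ} (hx : 0 < x) (hx6 : x ^ 2 ≤ 6) :
    x ^ 2 - sin x ^ 2 < x ^ 4 / 3 := by
  have hcubic : 0 ≤ x - x ^ 3 / 6 := by nlinarith
  have hsq : (x - x ^ 3 / 6) ^ 2 ≤ sin x ^ 2 :=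
    pow_le_pow_left₀ hcubic (sin_ge_sub_cube hx.le) 2
  nlinarith [pow_pos hx 6]

theorem sq_sub_sin_sq_ge {x : ℝ} (hx₀ : 0 ≤ x) (hxπ : x ≤ π) :
    x ^ 4 / 3 - 2 / 45 * x ^ 6 ≤ x ^ 2 - sin x ^ 2 := by
  have hsq : sin x ^ 2 ≤ (x - x ^ 3 / 6 + x ^ 5 / 120) ^ 2 := pow_le_pow_left₀
    (sin_nonneg_of_nonneg_of_le_pi hx₀ hxπ) (sin_le_sub_cube_add_quintic hx₀) 2
  -- the square of the quintic exceeds `x² - x⁴/3 + 2x⁶/45` by `x⁸ (x² - 40) / 14400`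
  have hx40 : x ^ 2 ≤ 40 := by nlinarith [pi_lt_four]
  nlinarith [pow_nonneg hx₀ 8]

theorem sin_sq_mul_one_sub_cos_sq_lt {x : ℝ} (hx : x ≠ 0) :
    sin x ^ 2 * (1 - cos x) ^ 2 < x ^ 6 / 4 := by
  have hcos : (1 - cos x) ^ 2 ≤ (x ^ 2 / 2) ^ 2 := pow_le_pow_left₀
    (by linarith [cos_le_one x]) (by linarith [one_sub_sq_div_two_le_cos (x := x)]) 2
  calc sin x ^ 2 * (1 - cos x) ^ 2 ≤ sin x ^ 2 * (x ^ 2 / 2) ^ 2 := by gcongr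
    _ < x ^ 2 * (x ^ 2 / 2) ^ 2 := mul_lt_mul_of_pos_right (sin_sq_lt_sq hx) (by positivity)
    _ = x ^ 6 / 4 := by ring

end Real

theorem triArea_lantern_sq (θ h : ℝ) :
    triArea vecP ![cos θ, sin θ, h] ![cos (2 * θ), sin (2 * θ), 0] ^ 2 =
      sin θ ^ 2 * (h ^ 2 + (1 - cos θ) ^ 2) := by
  rw [triArea, mul_pow, sq_sqrt (by positivity)]
  simp only [vecP, Matrix.cons_val_zero, Matrix.cons_val_one, Matrix.cons_val_two,
    Matrix.head_cons, Matrix.tail_cons, cos_two_mul, sin_two_mul]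
  linear_combination h ^ 2 * (cos θ ^ 2 - 1) * sin_sq_add_cos_sq θ

theorem sq_two_pi_sub_sq_lantern_area {N M : ℝ} (hN : N ≠ 0) (hM : M ≠ 0) :
    (2 * π) ^ 2 - (4 * N * M * triArea vecP (vecQ N M) (vecR N)) ^ 2 =
      4 * N ^ 2 * ((π / N) ^ 2 - sin (π / N) ^ 2 -
        4 * M ^ 2 * sin (π / N) ^ 2 * (1 - cos (π / N)) ^ 2) := by
  rw [vecQ, vecR, show 2 * π / N = 2 * (π / N) by ring, mul_pow (4 * N * M),
    triArea_lantern_sq]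
  field_simp
  ring

/-- with `S = 2π` the cylinder area and `S̄ = 4NM·Ā_pqr` the total Schwarz
lantern area, `4π⁴/(3N²) − (4π⁶/(45N⁴))(2 + 45M²) < S² − S̄² < 4π⁴/(3N²)` for all `M ≥ 1`
and all sufficiently large `N`. -/
theorem schwarz_total_area_error_bounds :
    ∃ N₀ : ℕ, ∀ N M : ℕ, N₀ ≤ N → 1 ≤ M →
      let Sbar : ℝ := 4 * N * M * triArea vecP (vecQ N M) (vecR N)
      4 * π ^ 4 / (3 * N ^ 2) - (4 * π ^ 6 / (45 * N ^ 4)) * (2 + 45 * M ^ 2)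
          < (2 * π) ^ 2 - Sbar ^ 2 ∧
      (2 * π) ^ 2 - Sbar ^ 2 < 4 * π ^ 4 / (3 * N ^ 2) := by
  refine ⟨2, fun N M hN hM => ?_⟩
  have hN2 : (2 : ℝ) ≤ N := by exact_mod_cast hN
  have hM0 : (0 : ℝ) < M := by exact_mod_cast hM
  have hN0 : (N : ℝ) ≠ 0 := by positivity
  dsimp only
  rw [sq_two_pi_sub_sq_lantern_area hN0 hM0.ne']
  set x := π / N with hx
  have hx0 : 0 < x := by positivity
  have hx2 : x ≤ π / 2 := div_le_div_of_nonneg_left pi_pos.le two_pos hN2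
  have hupper := sq_sub_sin_sq_lt hx0 (by nlinarith [pi_lt_four])
  have hlower := sq_sub_sin_sq_ge hx0.le (by linarith [pi_pos])
  have hcorr := mul_lt_mul_of_pos_left (sin_sq_mul_one_sub_cos_sq_lt hx0.ne') (pow_pos hM0 2)
  have hcorr_nonneg : 0 ≤ 4 * (M : ℝ) ^ 2 * sin x ^ 2 * (1 - cos x) ^ 2 := by positivity
  have hscale : (0 : ℝ) < 4 * N ^ 2 := by positivity
  constructor
  · calc 4 * π ^ 4 / (3 * N ^ 2) - (4 * π ^ 6 / (45 * N ^ 4)) * (2 + 45 * M ^ 2)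
        = 4 * N ^ 2 * (x ^ 4 / 3 - 2 / 45 * x ^ 6 - M ^ 2 * x ^ 6) := by
          rw [hx]; field_simp; ring
      _ < _ := mul_lt_mul_of_pos_left (by linarith) hscale
  · calc _ < 4 * N ^ 2 * (x ^ 4 / 3) := mul_lt_mul_of_pos_left (by linarith) hscale
      _ = 4 * π ^ 4 / (3 * N ^ 2) := by rw [hx]; field_simp
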